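/- For λ = (λ₁ ≤ λ₂) ∈ ℤ², the polynomial P_λ(x₁,x₂) = x_+^{λ₁+λ₂} ((q;q)_{λ₂₁}/(t;q)_{λ₂₁}) C_{λ₂₁}((x_− + x_−^{−1})/2; t|q), with x_± = (x₁x₂^{±1})^{1/2}, is a common eigenfunction of the Macdonald operators H₁ = v₁₂ T_{q,x₁} + v₂₁ T_{q,x₂} and H₂ = T_{q,x₁}T_{q,x₂}, with eigenvalues h₁ = t^{−1/2}q^{λ₁} + t^{1/2}q^{λ₂} and h₂ = q^{λ₁+λ₂}, where v_{jk} = (t^{1/2}x_j − t^{−1/2}x_k)/(x_j − x_k). -/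

import Mathlib

/-! In the coordinates `a = x₊`, `b = x₋` the operator `H₂` only rescales `a`, while `H₁` sends
`a^{λ₁+λ₂} b^{n-2k}` (`n = λ₂ - λ₁`) to a combination of `b^{n-2k}` and `b^{n-2k+2}` once the
denominator `b² - 1` of `v₁₂, v₂₁` is cleared. The eigen-equation for `H₁` therefore telescopes as
soon as the coefficients `c_k` of `C_n(·; t|q)` satisfy
`c_k (1 - q^{n-k}) (1 - t q^k) = c_{k+1} (1 - q^{k+1}) (1 - t q^{n-k-1})`,
which is immediate from their product form. -/

open Finset

/-- The q-Pochhammer symbol `(a;q)_n`. -/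
noncomputable def qPoch (a q : ℂ) (n : ℕ) : ℂ := ∏ j ∈ Finset.range n, (1 - a * q ^ j)

/-- The A₁ Macdonald polynomial P_λ written in the variables a = x₊ = (x₁x₂)^{1/2},
b = x₋ = (x₁/x₂)^{1/2}:
P_λ = a^{λ₁+λ₂} ((q;q)_{λ₂₁}/(t;q)_{λ₂₁}) C_{λ₂₁}((b+b⁻¹)/2; t|q), where the
continuous q-ultraspherical polynomial is the Laurent polynomial
C_n((b+b⁻¹)/2; t|q) = Σ_{k=0}^n (t;q)_k(t;q)_{n−k}/((q;q)_k(q;q)_{n−k}) b^{n−2k}. -/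
noncomputable def MacdonaldA1 (q t : ℂ) (l1 l2 : ℤ) (a b : ℂ) : ℂ :=
  a ^ (l1 + l2) * (qPoch q q (l2 - l1).toNat / qPoch t q (l2 - l1).toNat) *
    ∑ k ∈ range ((l2 - l1).toNat + 1),
      qPoch t q k * qPoch t q ((l2 - l1).toNat - k) /
        (qPoch q q k * qPoch q q ((l2 - l1).toNat - k)) *
      b ^ ((l2 - l1) - 2 * (k : ℤ))

lemma qPoch_succ (a q : ℂ) (n : ℕ) :
    qPoch a q (n + 1) = qPoch a q n * (1 - a * q ^ n) :=
  prod_range_succ _ _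

lemma qPoch_self_ne_zero {q : ℝ} (hq : q ∈ Set.Ioo (0 : ℝ) 1) (n : ℕ) :
    qPoch (q : ℂ) (q : ℂ) n ≠ 0 := by
  refine prod_ne_zero_iff.2 fun j _ => ?_
  have hlt : q * q ^ j < 1 := by
    rw [← pow_succ']
    exact pow_lt_one₀ hq.1.le hq.2 j.succ_ne_zero
  exact_mod_cast (sub_pos.2 hlt).ne'

theorem sum_range_succ_eq_of_shift {M : Type*} [AddCommMonoid M] (f g : ℕ → M) (n : ℕ)
    (hf : f 0 = 0) (hg : g n = 0) (h : ∀ k < n, f (k + 1) = g k) :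
    ∑ k ∈ range (n + 1), f k = ∑ k ∈ range (n + 1), g k := by
  rw [sum_range_succ', sum_range_succ, hf, hg, add_zero, add_zero]
  exact sum_congr rfl fun k hk => h k (mem_range.1 hk)

noncomputable def ultrasphericalCoeff (q t : ℂ) (n k : ℕ) : ℂ :=
  qPoch t q k * qPoch t q (n - k) / (qPoch q q k * qPoch q q (n - k))

noncomputable def qUltraspherical (q t : ℂ) (n : ℕ) (b : ℂ) : ℂ :=
  ∑ k ∈ range (n + 1), ultrasphericalCoeff q t n k * b ^ ((n : ℤ) - 2 * k)

lemma one_sub_pow_succ_ne_zero {q : ℂ} (hq : ∀ j, qPoch q q j ≠ 0) (j : ℕ) :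
    1 - q ^ (j + 1) ≠ 0 := by
  have h := hq (j + 1)
  rw [qPoch_succ, ← pow_succ'] at h
  exact right_ne_zero_of_mul h

theorem ultrasphericalCoeff_recurrence {q t : ℂ} (hq : ∀ j, qPoch q q j ≠ 0) (k m : ℕ) :
    ultrasphericalCoeff q t (k + m + 1) k * (1 - q ^ (m + 1)) * (1 - t * q ^ k) =
      ultrasphericalCoeff q t (k + m + 1) (k + 1) * (1 - q ^ (k + 1)) * (1 - t * q ^ m) := by
  simp only [ultrasphericalCoeff, show k + m + 1 - k = m + 1 by omega,
    show k + m + 1 - (k + 1) = m by omega, qPoch_succ, ← pow_succ']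
  field_simp [hq k, hq m, one_sub_pow_succ_ne_zero hq k, one_sub_pow_succ_ne_zero hq m]

theorem sum_mul_zpow_eigen_of_recurrence {K : Type*} [Field K] {q t b : K} (hb : b ≠ 0) (n : ℕ)
    (c : ℕ → K) (hc : ∀ k < n, c k * (1 - q ^ (n - k)) * (1 - t * q ^ k) =
      c (k + 1) * (1 - q ^ (k + 1)) * (1 - t * q ^ (n - (k + 1)))) :
    (t * b ^ 2 - 1) * ∑ k ∈ range (n + 1), c k * q ^ (n - k) * b ^ ((n : ℤ) - 2 * k)
      + (b ^ 2 - t) * ∑ k ∈ range (n + 1), c k * q ^ k * b ^ ((n : ℤ) - 2 * k)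
      = (b ^ 2 - 1) * (1 + t * q ^ n) * ∑ k ∈ range (n + 1), c k * b ^ ((n : ℤ) - 2 * k) := by
  set f : ℕ → K := fun k => c k * (1 - q ^ k) * (1 - t * q ^ (n - k)) * b ^ ((n : ℤ) - 2 * k + 2)
  set g : ℕ → K := fun k => c k * (1 - q ^ (n - k)) * (1 - t * q ^ k) * b ^ ((n : ℤ) - 2 * k)
  have hfg : ∑ k ∈ range (n + 1), f k = ∑ k ∈ range (n + 1), g k := by
    refine sum_range_succ_eq_of_shift f g n (by simp [f]) (by simp [g]) fun k hk => ?_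
    simp only [f, g, hc k hk]
    congr 2
    push_cast
    ring
  rw [mul_sum, mul_sum, mul_sum, ← sum_add_distrib, ← sub_eq_zero, ← sum_sub_distrib]
  rw [← sub_eq_zero.2 hfg.symm, ← sum_sub_distrib]
  refine sum_congr rfl fun k hk => ?_
  have hqk : q ^ (n - k) * q ^ k = q ^ n := by
    rw [← pow_add, Nat.sub_add_cancel (Nat.lt_succ_iff.1 (mem_range.1 hk))]
  simp only [f, g, zpow_add₀ hb, zpow_two]
  linear_combination (b * b - 1) * c k * b ^ ((n : ℤ) - 2 * k) * t * hqk

theorem pow_mul_qUltraspherical_mul {q t r : ℂ} (hr : r ≠ 0) (hr2 : r ^ 2 = q) (n : ℕ) (b : ℂ) :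
    r ^ n * qUltraspherical q t n (r * b) =
      ∑ k ∈ range (n + 1), ultrasphericalCoeff q t n k * q ^ (n - k) * b ^ ((n : ℤ) - 2 * k) := by
  rw [qUltraspherical, mul_sum]
  refine sum_congr rfl fun k hk => ?_
  have hpow : r ^ n * r ^ ((n : ℤ) - 2 * k) = q ^ (n - k) := by
    have hk : k ≤ n := Nat.lt_succ_iff.1 (mem_range.1 hk)
    rw [← zpow_natCast, ← zpow_add₀ hr, ← hr2, ← pow_mul, ← zpow_natCast]
    congr 1
    push_cast [hk]
    ring
  rw [mul_zpow, ← hpow]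
  ring

theorem pow_mul_qUltraspherical_div {q t r : ℂ} (hr : r ≠ 0) (hr2 : r ^ 2 = q) (n : ℕ) (b : ℂ) :
    r ^ n * qUltraspherical q t n (b / r) =
      ∑ k ∈ range (n + 1), ultrasphericalCoeff q t n k * q ^ k * b ^ ((n : ℤ) - 2 * k) := by
  rw [qUltraspherical, mul_sum]
  refine sum_congr rfl fun k _ => ?_
  have hpow : r ^ n / r ^ ((n : ℤ) - 2 * k) = q ^ k := by
    rw [← zpow_natCast, ← zpow_sub₀ hr, ← hr2, ← pow_mul, ← zpow_natCast]
    congr 1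
    push_cast
    ring
  rw [div_zpow, ← hpow]
  field_simp

theorem qUltraspherical_shift {q t r b : ℂ} (hq : ∀ j, qPoch q q j ≠ 0) (hr : r ≠ 0)
    (hr2 : r ^ 2 = q) (hb : b ≠ 0) (n : ℕ) :
    (t * b ^ 2 - 1) * (r ^ n * qUltraspherical q t n (r * b))
      + (b ^ 2 - t) * (r ^ n * qUltraspherical q t n (b / r))
      = (b ^ 2 - 1) * (1 + t * q ^ n) * qUltraspherical q t n b := by
  rw [pow_mul_qUltraspherical_mul hr hr2, pow_mul_qUltraspherical_div hr hr2]
  refine sum_mul_zpow_eigen_of_recurrence hb n _ fun k hk => ?_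
  obtain ⟨m, rfl⟩ := Nat.exists_eq_add_of_lt hk
  simpa only [show k + m + 1 - k = m + 1 by omega, show k + m + 1 - (k + 1) = m by omega]
    using ultrasphericalCoeff_recurrence hq k m

theorem macdonaldA1_add_natCast (q t : ℂ) (l : ℤ) (n : ℕ) (a b : ℂ) :
    MacdonaldA1 q t l (l + n) a b =
      a ^ (2 * l + n) * (qPoch q q n / qPoch t q n) * qUltraspherical q t n b := by
  simp only [MacdonaldA1, qUltraspherical, ultrasphericalCoeff, add_sub_cancel_left,
    Int.toNat_natCast, two_mul, add_assoc]

theorem macdonaldA1_H1_eigen {q t r s : ℂ} (hq : ∀ j, qPoch q q j ≠ 0) (hr : r ≠ 0)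
    (hr2 : r ^ 2 = q) (hs : s ≠ 0) (hs2 : s ^ 2 = t) (l : ℤ) (n : ℕ) {a b : ℂ} (ha : a ≠ 0)
    (hb : b ≠ 0) (hb1 : b ^ 2 ≠ 1) :
    (s * (a * b) - s⁻¹ * (a / b)) / (a * b - a / b) * MacdonaldA1 q t l (l + n) (r * a) (r * b)
      + (s * (a / b) - s⁻¹ * (a * b)) / (a / b - a * b) *
        MacdonaldA1 q t l (l + n) (r * a) (b / r)
      = (s⁻¹ * q ^ l + s * q ^ (l + n)) * MacdonaldA1 q t l (l + n) a b := by
  have hq0 : q ≠ 0 := hr2 ▸ pow_ne_zero 2 hr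
  have hb1' : b ^ 2 - 1 ≠ 0 := sub_ne_zero.2 hb1
  have hra : (r * a) ^ (2 * l + n) = q ^ l * r ^ n * a ^ (2 * l + n) := by
    rw [mul_zpow, zpow_add₀ hr, zpow_mul, zpow_natCast, ← hr2, zpow_ofNat]
  simp only [macdonaldA1_add_natCast, hra, zpow_add₀ hq0, zpow_natCast]
  calc _ = s⁻¹ * q ^ l * a ^ (2 * l + n) * (qPoch q q n / qPoch t q n) *
        (((t * b ^ 2 - 1) * (r ^ n * qUltraspherical q t n (r * b))
          + (b ^ 2 - t) * (r ^ n * qUltraspherical q t n (b / r))) / (b ^ 2 - 1)) := by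
        subst hs2
        field_simp
        ring
    _ = _ := by
        rw [qUltraspherical_shift hq hr hr2 hb, ← hs2]
        field_simp

theorem macdonaldA1_mul_left (q t : ℂ) (l1 l2 : ℤ) (c a b : ℂ) :
    MacdonaldA1 q t l1 l2 (c * a) b = c ^ (l1 + l2) * MacdonaldA1 q t l1 l2 a b := by
  simp only [MacdonaldA1, mul_zpow, mul_assoc]

/-- Here x₁ = a·b, x₂ = a/b, r = q^{1/2}, s = t^{1/2}; the shift T_{q,x₁} is
(a,b) ↦ (ra, rb) and T_{q,x₂} is (a,b) ↦ (ra, b/r). -/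
theorem macdonaldA1_eigenfunction_general (q t : ℝ) (hq : q ∈ Set.Ioo (0 : ℝ) 1)
    (r s : ℝ) (hr : 0 < r) (hr2 : r ^ 2 = q)
    (hs : 0 < s) (hs2 : s ^ 2 = t) (l1 l2 : ℤ) (hl : l1 ≤ l2)
    (a b : ℂ) (ha : a ≠ 0) (hb : b ≠ 0) (hb1 : b ^ 2 ≠ 1) :
    (((s : ℂ) * (a * b) - (s : ℂ)⁻¹ * (a / b)) / (a * b - a / b) *
        MacdonaldA1 (q : ℂ) (t : ℂ) l1 l2 ((r : ℂ) * a) ((r : ℂ) * b)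
      + ((s : ℂ) * (a / b) - (s : ℂ)⁻¹ * (a * b)) / (a / b - a * b) *
        MacdonaldA1 (q : ℂ) (t : ℂ) l1 l2 ((r : ℂ) * a) (b / (r : ℂ))
      = ((s : ℂ)⁻¹ * (q : ℂ) ^ l1 + (s : ℂ) * (q : ℂ) ^ l2) *
          MacdonaldA1 (q : ℂ) (t : ℂ) l1 l2 a b)
    ∧ MacdonaldA1 (q : ℂ) (t : ℂ) l1 l2 ((q : ℂ) * a) b
        = (q : ℂ) ^ (l1 + l2) * MacdonaldA1 (q : ℂ) (t : ℂ) l1 l2 a b := by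
  obtain ⟨n, rfl⟩ := Int.le.dest hl
  refine ⟨macdonaldA1_H1_eigen (qPoch_self_ne_zero hq) (by exact_mod_cast hr.ne')
    (by exact_mod_cast hr2) (by exact_mod_cast hs.ne') (by exact_mod_cast hs2) l1 n ha hb hb1,
    macdonaldA1_mul_left _ _ _ _ _ _ _⟩

/-- P_λ is a common eigenfunction of the A₁ Macdonald operators
H₁ = v₁₂T_{q,x₁} + v₂₁T_{q,x₂} and H₂ = T_{q,x₁}T_{q,x₂}, with eigenvalues
h₁ = t^{−1/2}q^{λ₁} + t^{1/2}q^{λ₂} and h₂ = q^{λ₁+λ₂}.  Here x₁ = a·b,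
x₂ = a/b, r = q^{1/2}, s = t^{1/2}; the shift T_{q,x₁} is (a,b) ↦ (ra, rb) and
T_{q,x₂} is (a,b) ↦ (ra, b/r). -/
theorem macdonaldA1_eigenfunction (q t : ℝ) (hq : q ∈ Set.Ioo (0 : ℝ) 1)
    (ht : t ∈ Set.Ioo (0 : ℝ) 1) (r s : ℝ) (hr : 0 < r) (hr2 : r ^ 2 = q)
    (hs : 0 < s) (hs2 : s ^ 2 = t) (l1 l2 : ℤ) (hl : l1 ≤ l2)
    (a b : ℂ) (ha : a ≠ 0) (hb : b ≠ 0) (hb1 : b ^ 2 ≠ 1) :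
    (((s : ℂ) * (a * b) - (s : ℂ)⁻¹ * (a / b)) / (a * b - a / b) *
        MacdonaldA1 (q : ℂ) (t : ℂ) l1 l2 ((r : ℂ) * a) ((r : ℂ) * b)
      + ((s : ℂ) * (a / b) - (s : ℂ)⁻¹ * (a * b)) / (a / b - a * b) *
        MacdonaldA1 (q : ℂ) (t : ℂ) l1 l2 ((r : ℂ) * a) (b / (r : ℂ))
      = ((s : ℂ)⁻¹ * (q : ℂ) ^ l1 + (s : ℂ) * (q : ℂ) ^ l2) *
          MacdonaldA1 (q : ℂ) (t : ℂ) l1 l2 a b)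
    ∧ MacdonaldA1 (q : ℂ) (t : ℂ) l1 l2 ((q : ℂ) * a) b
        = (q : ℂ) ^ (l1 + l2) * MacdonaldA1 (q : ℂ) (t : ℂ) l1 l2 a b :=
  macdonaldA1_eigenfunction_general q t hq r s hr hr2 hs hs2 l1 l2 hl a b ha hb hb1
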